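/- Let K ∈ ℕ (K ≥ 1) and 0 ≤ p < 1. For a subset S ⊆ [1,ℓ], let Q_K(S) = |{X ⊆ S : cl(X) = K}|. Then there exists a constant C ≥ 0 such that for all ℓ ≥ 1: | Σ_{S ⊆ [1,ℓ]} p^{|S|} (1−p)^{ℓ−|S|} · Q_K(S) − (1/K!) · (p/(1−p))^K · ℓ^K | ≤ C · ℓ^{K−1}. (The left-hand sum is the expectation E(Q_{K,ℓ}) when each site j ∈ [1,ℓ] independently belongs to the random set I_ℓ with probability p.) -/

import Mathlib

/-- Number of connected components (clusters) of a finite set of integers. -/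
def clZ (X : Finset ℤ) : ℕ := (X.filter (fun x => x - 1 ∉ X)).card

/-- `Q_K(S)`: the number of subsets of `S` with exactly `K` clusters. -/
def QK (K : ℕ) (S : Finset ℤ) : ℕ := (S.powerset.filter (fun X => clZ X = K)).card


lemma clZ_empty : clZ ∅ = 0 := by simp [clZ]

lemma clZ_eq_zero_iff (X : Finset ℤ) : clZ X = 0 ↔ X = ∅ := by
  constructor
  · intro h
    by_contra hne
    have hne' : X.Nonempty := Finset.nonempty_iff_ne_empty.2 hne
    have hmin := X.min'_mem hne'
    have : X.min' hne' ∈ X.filter (fun x => x - 1 ∉ X) := by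
      refine Finset.mem_filter.2 ⟨hmin, fun hc => ?_⟩
      have := X.min'_le _ hc
      omega
    have : (X.filter (fun x => x - 1 ∉ X)).card ≠ 0 :=
      Finset.card_ne_zero_of_mem this
    exact this h
  · rintro rfl; simp [clZ]

lemma clZ_insert (a : ℤ) (X : Finset ℤ) (h : ∀ x ∈ X, x < a) :
    clZ (insert a X) = clZ X + (if a - 1 ∈ X then 0 else 1) := by
  have ha : a ∉ X := fun hx => absurd (h a hx) (lt_irrefl a)
  unfold clZ
  rw [Finset.filter_insert]
  have hfilter : (X.filter (fun x => x - 1 ∉ insert a X)) = X.filter (fun x => x - 1 ∉ X) := by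
    apply Finset.filter_congr
    intro x hx
    have hxa := h x hx
    simp only [Finset.mem_insert, not_or, eq_iff_iff]
    constructor
    · rintro ⟨-, h2⟩; exact h2
    · intro h2; exact ⟨by omega, h2⟩
  by_cases hb : a - 1 ∈ X
  · have : ¬ (a - 1 ∉ insert a X) := by
      simp [Finset.mem_insert, hb]
    rw [if_neg this, hfilter, if_pos hb]; ring
  · have : a - 1 ∉ insert a X := by
      simp only [Finset.mem_insert, not_or]
      exact ⟨by omega, hb⟩
    rw [if_pos this, hfilter, if_neg hb]
    rw [Finset.card_insert_of_notMem (fun hc => ha (Finset.mem_filter.1 hc).1)]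

noncomputable def Gf (p : ℝ) (n K : ℕ) : ℝ :=
  ∑ X ∈ (Finset.Icc (1:ℤ) (n:ℤ)).powerset.filter (fun X => clZ X = K), p ^ X.card

noncomputable def Hf (p : ℝ) (n K : ℕ) : ℝ :=
  ∑ X ∈ (Finset.Icc (1:ℤ) (n:ℤ)).powerset.filter (fun X => clZ X = K ∧ (n:ℤ) ∈ X), p ^ X.card

lemma Icc_succ (n : ℕ) :
    Finset.Icc (1:ℤ) ((n:ℤ)+1) = insert ((n:ℤ)+1) (Finset.Icc (1:ℤ) (n:ℤ)) := by
  ext x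
  simp only [Finset.mem_Icc, Finset.mem_insert]
  omega

lemma notmem_Icc (n : ℕ) : ((n:ℤ)+1) ∉ Finset.Icc (1:ℤ) (n:ℤ) := by
  simp [Finset.mem_Icc]

lemma Gf_zero (p : ℝ) (K : ℕ) : Gf p 0 K = if K = 0 then 1 else 0 := by
  have : Finset.Icc (1:ℤ) ((0:ℕ):ℤ) = ∅ := by simp
  rw [Gf, this]
  by_cases hK : K = 0
  · rw [if_pos hK, Finset.powerset_empty]
    subst hK
    rw [Finset.sum_filter]
    simp [clZ_empty]
  · rw [if_neg hK, Finset.powerset_empty]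
    rw [Finset.sum_filter]
    simp [clZ_empty, Ne.symm hK]

lemma Hf_zero (p : ℝ) (K : ℕ) : Hf p 0 K = 0 := by
  have : Finset.Icc (1:ℤ) ((0:ℕ):ℤ) = ∅ := by simp
  rw [Hf, this, Finset.powerset_empty, Finset.sum_filter]
  simp

lemma Hf_zeroK (p : ℝ) (n : ℕ) : Hf p n 0 = 0 := by
  rw [Hf]
  rw [Finset.sum_eq_zero]
  intro X hX
  exfalso
  rw [Finset.mem_filter] at hX
  obtain ⟨-, h0, hn⟩ := hX
  rw [clZ_eq_zero_iff] at h0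
  subst h0
  simp at hn

lemma mem_le_of_subset_Icc {n : ℕ} {X : Finset ℤ} (hX : X ⊆ Finset.Icc (1:ℤ) (n:ℤ)) :
    ∀ x ∈ X, x < (n:ℤ) + 1 := by
  intro x hx
  have := hX hx
  rw [Finset.mem_Icc] at this
  omega

lemma Hf_succ_aux (p : ℝ) (n K : ℕ) :
    Hf p (n+1) K
      = ∑ X ∈ (Finset.Icc (1:ℤ) (n:ℤ)).powerset,
          (if clZ (insert ((n:ℤ)+1) X) = K then p ^ (X.card + 1) else 0) := by
  rw [Hf, Finset.sum_filter]
  rw [show (((n+1 : ℕ)) : ℤ) = (n:ℤ)+1 from by push_cast; ring]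
  rw [Icc_succ n, Finset.sum_powerset_insert (notmem_Icc n)]
  have h1 : ∀ X ∈ (Finset.Icc (1:ℤ) (n:ℤ)).powerset,
      (if clZ X = K ∧ ((n:ℤ)+1) ∈ X then p ^ X.card else 0) = 0 := by
    intro X hX
    rw [Finset.mem_powerset] at hX
    have : ((n:ℤ)+1) ∉ X := fun hc => notmem_Icc n (hX hc)
    simp [this]
  rw [Finset.sum_congr rfl h1, Finset.sum_const_zero, zero_add]
  apply Finset.sum_congr rfl
  intro X hX
  rw [Finset.mem_powerset] at hX
  have hnot : ((n:ℤ)+1) ∉ X := fun hc => notmem_Icc n (hX hc)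
  have hmem : ((n:ℤ)+1) ∈ insert ((n:ℤ)+1) X := Finset.mem_insert_self _ _
  rw [Finset.card_insert_of_notMem hnot]
  simp only [hmem, and_true]

lemma Gf_succ (p : ℝ) (n K : ℕ) :
    Gf p (n+1) K = Gf p n K + Hf p (n+1) K := by
  rw [Gf, Finset.sum_filter, Hf_succ_aux]
  rw [show (((n+1 : ℕ)) : ℤ) = (n:ℤ)+1 from by push_cast; ring]
  rw [Icc_succ n, Finset.sum_powerset_insert (notmem_Icc n)]
  congr 1
  · rw [Gf, Finset.sum_filter]
  · apply Finset.sum_congr rfl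
    intro X hX
    rw [Finset.mem_powerset] at hX
    have hnot : ((n:ℤ)+1) ∉ X := fun hc => notmem_Icc n (hX hc)
    rw [Finset.card_insert_of_notMem hnot]

lemma Hf_succ (p : ℝ) (n K : ℕ) :
    Hf p (n+1) (K+1) = p * (Hf p n (K+1) + Gf p n K - Hf p n K) := by
  rw [Hf_succ_aux]
  have key : ∀ X ∈ (Finset.Icc (1:ℤ) (n:ℤ)).powerset,
      (if clZ (insert ((n:ℤ)+1) X) = K+1 then p ^ (X.card + 1) else 0)
      = p * ((if clZ X = K+1 ∧ (n:ℤ) ∈ X then p ^ X.card else 0)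
          + (if clZ X = K then p ^ X.card else 0)
          - (if clZ X = K ∧ (n:ℤ) ∈ X then p ^ X.card else 0)) := by
    intro X hX
    rw [Finset.mem_powerset] at hX
    have hcl := clZ_insert ((n:ℤ)+1) X (mem_le_of_subset_Icc hX)
    rw [show (n:ℤ)+1-1 = (n:ℤ) from by ring] at hcl
    by_cases hn : (n:ℤ) ∈ X
    · rw [hcl, if_pos hn]
      by_cases hc : clZ X = K+1
      · simp [hc, hn, pow_succ]; ring
      · have hc2 : ¬ (clZ X + 0 = K+1) := by omega
        simp only [if_neg hc2, if_neg (fun h : clZ X = K+1 ∧ (n:ℤ) ∈ X => hc h.1)]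
        by_cases hK : clZ X = K
        · simp [hK, hn]
        · simp [hK, hn]
    · rw [hcl, if_neg hn]
      have h1 : ¬ (clZ X = K+1 ∧ (n:ℤ) ∈ X) := fun h => hn h.2
      have h2 : ¬ (clZ X = K ∧ (n:ℤ) ∈ X) := fun h => hn h.2
      rw [if_neg h1, if_neg h2]
      by_cases hK : clZ X = K
      · have : clZ X + 1 = K + 1 := by omega
        simp [this, hK, pow_succ]; ring
      · have : ¬ (clZ X + 1 = K + 1) := by omega
        simp [this, hK]
  rw [Finset.sum_congr rfl key]
  rw [← Finset.mul_sum]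
  congr 1
  rw [Finset.sum_sub_distrib, Finset.sum_add_distrib]
  rw [Hf, Gf, Hf, Finset.sum_filter, Finset.sum_filter, Finset.sum_filter]

lemma sum_powerset_prob (p : ℝ) (A : Finset ℤ) :
    ∑ T ∈ A.powerset, p ^ T.card * (1-p) ^ (A.card - T.card) = 1 := by
  have h := Finset.prod_add (fun _ => p) (fun _ => (1-p)) A
  have h1 : ∏ i ∈ A, (p + (1-p)) = 1 := by
    rw [Finset.prod_const]
    norm_num
  rw [h1] at h
  calc ∑ T ∈ A.powerset, p ^ T.card * (1-p) ^ (A.card - T.card)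
      = ∑ t ∈ A.powerset, (∏ i ∈ t, p) * ∏ i ∈ A \ t, (1-p) :=
        Finset.sum_congr rfl (fun T hT => by
          rw [Finset.mem_powerset] at hT
          rw [Finset.prod_const, Finset.prod_const, Finset.card_sdiff_of_subset hT])
    _ = 1 := h.symm

lemma innerSumProb (p : ℝ) (ℓ : ℕ) (X : Finset ℤ) (hX : X ⊆ Finset.Icc (1:ℤ) (ℓ:ℤ)) :
    ∑ S ∈ (Finset.Icc (1:ℤ) (ℓ:ℤ)).powerset.filter (fun S => X ⊆ S),
      p ^ S.card * (1-p) ^ (ℓ - S.card) = p ^ X.card := by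
  set Ω := Finset.Icc (1:ℤ) (ℓ:ℤ) with hΩ
  have hΩcard : Ω.card = ℓ := by
    rw [hΩ, Int.card_Icc]
    simp
  have step : ∑ S ∈ Ω.powerset.filter (fun S => X ⊆ S), p ^ S.card * (1-p) ^ (ℓ - S.card)
      = ∑ T ∈ (Ω \ X).powerset, p ^ (X.card + T.card) * (1-p) ^ (ℓ - (X.card + T.card)) := by
    apply Finset.sum_nbij' (fun S => S \ X) (fun T => X ∪ T)
    · intro S hS
      rw [Finset.mem_filter, Finset.mem_powerset] at hS
      rw [Finset.mem_powerset]
      exact Finset.sdiff_subset_sdiff hS.1 (le_refl X)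
    · intro T hT
      rw [Finset.mem_powerset] at hT
      rw [Finset.mem_filter, Finset.mem_powerset]
      refine ⟨Finset.union_subset hX (hT.trans Finset.sdiff_subset), Finset.subset_union_left⟩
    · intro S hS
      rw [Finset.mem_filter] at hS
      exact Finset.union_sdiff_of_subset hS.2
    · intro T hT
      rw [Finset.mem_powerset] at hT
      have hd : Disjoint X T :=
        Finset.disjoint_of_subset_right hT Finset.disjoint_sdiff
      rw [Finset.union_sdiff_cancel_left hd]
    · intro S hS
      rw [Finset.mem_filter] at hS
      have hcard : X.card + (S \ X).card = S.card := by
        rw [add_comm]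
        exact Finset.card_sdiff_add_card_eq_card hS.2
      rw [hcard]
  rw [step]
  have hAcard : (Ω \ X).card = ℓ - X.card := by rw [Finset.card_sdiff_of_subset hX, hΩcard]
  have step2 : ∀ T ∈ (Ω \ X).powerset,
      p ^ (X.card + T.card) * (1-p) ^ (ℓ - (X.card + T.card))
      = p ^ X.card * (p ^ T.card * (1-p) ^ ((Ω \ X).card - T.card)) := by
    intro T hT
    rw [pow_add, hAcard, Nat.sub_sub]
    ring
  rw [Finset.sum_congr rfl step2, ← Finset.mul_sum, sum_powerset_prob, mul_one]

lemma expectation_eq (p : ℝ) (K ℓ : ℕ) :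
    ∑ S ∈ (Finset.Icc (1:ℤ) (ℓ:ℤ)).powerset,
        p ^ S.card * (1 - p) ^ (ℓ - S.card) * (QK K S : ℝ)
    = Gf p ℓ K := by
  set Ω := Finset.Icc (1:ℤ) (ℓ:ℤ) with hΩ
  have h1 : ∀ S ∈ Ω.powerset,
      p ^ S.card * (1 - p) ^ (ℓ - S.card) * (QK K S : ℝ)
      = ∑ X ∈ S.powerset, (if clZ X = K then p ^ S.card * (1 - p) ^ (ℓ - S.card) else 0) := by
    intro S hS
    rw [QK, Finset.card_filter]
    push_cast
    rw [Finset.mul_sum]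
    apply Finset.sum_congr rfl
    intro X hX
    by_cases h : clZ X = K <;> simp [h]
  rw [Finset.sum_congr rfl h1]
  rw [Finset.sum_comm' (s' := fun X => Ω.powerset.filter (fun S => X ⊆ S)) (t' := Ω.powerset)
    (by
      intro S X
      simp only [Finset.mem_powerset, Finset.mem_filter]
      constructor
      · rintro ⟨h1, h2⟩; exact ⟨⟨h1, h2⟩, h2.trans h1⟩
      · rintro ⟨⟨h1, h2⟩, h3⟩; exact ⟨h1, h2⟩)]
  rw [Gf, Finset.sum_filter]
  apply Finset.sum_congr rfl
  intro X hX
  rw [Finset.mem_powerset] at hX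
  by_cases h : clZ X = K
  · simp only [h, if_true]
    rw [← innerSumProb p ℓ X hX]
  · simp [h]

lemma Gf_zeroK (p : ℝ) (n : ℕ) : Gf p n 0 = 1 := by
  induction n with
  | zero => simp [Gf_zero]
  | succ n ih => rw [Gf_succ, ih, Hf_zeroK, add_zero]

lemma Hf_one (p : ℝ) (hp1 : p < 1) (n : ℕ) :
    Hf p n 1 = (p/(1-p)) * (1 - p^n) := by
  have h1p : (1:ℝ) - p ≠ 0 := by linarith
  induction n with
  | zero => simp [Hf_zero]
  | succ n ih =>
    rw [show n + 1 = n + 0 + 1 from by ring, Hf_succ, Gf_zeroK, Hf_zeroK]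
    rw [show n + 0 = n from rfl, ih, sub_zero]
    have hq : (p/(1-p)) * (1-p) = p := div_mul_cancel₀ p h1p
    linear_combination (-1 : ℝ) * hq

lemma Gf_one (p : ℝ) (hp1 : p < 1) (n : ℕ) :
    Gf p n 1 = (p/(1-p)) * n - (p/(1-p))^2 * (1 - p^n) := by
  have h1p : (1:ℝ) - p ≠ 0 := by linarith
  induction n with
  | zero => simp [Gf_zero]
  | succ n ih =>
    rw [Gf_succ, ih, Hf_one p hp1]
    push_cast
    field_simp
    ring

lemma Hf_nonneg (p : ℝ) (hp0 : 0 ≤ p) (n K : ℕ) : 0 ≤ Hf p n K := by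
  apply Finset.sum_nonneg
  intro X hX
  exact pow_nonneg hp0 _

lemma ineq1 (a : ℝ) (ha : 0 ≤ a) (n : ℕ) :
    (a+1)^(n+1) ≤ a^(n+1) + (n+1) * (a+1)^n := by
  induction n with
  | zero => simp
  | succ n ih =>
    have h1 : (a+1)^(n+2) = (a+1) * (a+1)^(n+1) := by ring
    have h2 : (a+1) * (a+1)^(n+1) ≤ (a+1) * (a^(n+1) + (n+1) * (a+1)^n) :=
      mul_le_mul_of_nonneg_left ih (by linarith)
    have h3 : a^(n+1) ≤ (a+1)^(n+1) := pow_le_pow_left₀ ha (by linarith) _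
    have h4 : (a+1) * (a^(n+1) + (n+1) * (a+1)^n)
        = a^(n+2) + a^(n+1) + ((n:ℝ)+1) * (a+1)^(n+1) := by ring
    push_cast
    nlinarith [pow_nonneg ha (n+1), pow_nonneg (by linarith : (0:ℝ) ≤ a+1) n]

lemma ineq2 (a : ℝ) (ha : 0 ≤ a) (n : ℕ) :
    a^(n+1) + (n+1) * a^n ≤ (a+1)^(n+1) := by
  induction n with
  | zero => simp
  | succ n ih =>
    have h2 : (a+1) * (a^(n+1) + ((n:ℝ)+1) * a^n) ≤ (a+1) * (a+1)^(n+1) := by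
      apply mul_le_mul_of_nonneg_left _ (by linarith)
      push_cast at ih ⊢
      linarith
    have hpow : 0 ≤ a^n := pow_nonneg ha n
    have hpow1 : 0 ≤ a^(n+1) := pow_nonneg ha (n+1)
    have e1 : (a+1)^(n+1+1) = (a+1)*(a+1)^(n+1) := by ring
    have e2 : (a+1) * (a^(n+1) + ((n:ℝ)+1) * a^n) = a^(n+1+1) + ((n:ℝ)+2)*a^(n+1) + ((n:ℝ)+1)*a^n := by ring
    push_cast
    nlinarith [mul_nonneg (Nat.cast_nonneg n : (0:ℝ) ≤ n) hpow]

set_option maxHeartbeats 2000000 in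
lemma main_est (p : ℝ) (hp0 : 0 ≤ p) (hp1 : p < 1) (K : ℕ) :
    ∃ D : ℝ, 0 ≤ D ∧ ∀ ℓ : ℕ, 1 ≤ ℓ →
      |Hf p ℓ (K+1) - (p/(1-p))^(K+1) * (ℓ:ℝ)^K / (K.factorial : ℝ)| ≤ D * (ℓ:ℝ)^(K-1) ∧
      |Gf p ℓ (K+1) - (p/(1-p))^(K+1) * (ℓ:ℝ)^(K+1) / ((K+1).factorial : ℝ)| ≤ D * (ℓ:ℝ)^K := by
  have h1p : (0:ℝ) < 1 - p := by linarith
  set q : ℝ := p / (1-p) with hqdef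
  have hq0 : 0 ≤ q := div_nonneg hp0 (le_of_lt h1p)
  have hpq : p * (q + 1) = q := by
    rw [hqdef]
    field_simp
    ring
  induction K with
  | zero =>
    refine ⟨q + q^2, by positivity, ?_⟩
    intro ℓ hℓ
    have hple : p ^ ℓ ≤ 1 := pow_le_one₀ hp0 (le_of_lt hp1)
    have hp0ℓ : 0 ≤ p ^ ℓ := pow_nonneg hp0 ℓ
    constructor
    · rw [Hf_one p hp1, ← hqdef]
      rw [show q * (1 - p^ℓ) - q ^ (0+1) * (ℓ:ℝ)^0 / ((0:ℕ).factorial : ℝ) = -(q * p^ℓ) by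
        simp [Nat.factorial_zero]; ring]
      rw [abs_neg, abs_of_nonneg (by positivity)]
      have h1 : q * p^ℓ ≤ q := by nlinarith
      calc q * p^ℓ ≤ q := h1
        _ ≤ (q + q^2) * (ℓ:ℝ)^(0-1) := by
          simp only [Nat.zero_sub, pow_zero, mul_one]
          nlinarith [sq_nonneg q]
    · rw [Gf_one p hp1, ← hqdef]
      rw [show q * (ℓ:ℝ) - q^2 * (1 - p^ℓ) - q ^ (0+1) * (ℓ:ℝ)^(0+1) / ((0+1:ℕ).factorial : ℝ)
          = -(q^2 * (1 - p^ℓ)) by simp [Nat.factorial_one]]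
      rw [abs_neg, abs_of_nonneg (by nlinarith)]
      have h1 : q^2 * (1 - p^ℓ) ≤ q^2 := by nlinarith
      calc q^2 * (1 - p^ℓ) ≤ q^2 := h1
        _ ≤ (q + q^2) * (ℓ:ℝ)^0 := by
          simp only [pow_zero, mul_one]
          nlinarith
  | succ K ih =>
    obtain ⟨D, hD0, hD⟩ := ih
    have hcK0 : (0:ℝ) < (K.factorial : ℝ) := by exact_mod_cast K.factorial_pos
    have hc0 : (0:ℝ) < ((K+1).factorial : ℝ) := by exact_mod_cast (K+1).factorial_pos
    have hc20 : (0:ℝ) < ((K+1+1).factorial : ℝ) := by exact_mod_cast (K+1+1).factorial_pos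
    set cK : ℝ := (K.factorial : ℝ) with hcKdef
    set c : ℝ := ((K+1).factorial : ℝ) with hcdef
    set c2 : ℝ := ((K+1+1).factorial : ℝ) with hc2def
    have hfact : c = ((K:ℝ)+1) * cK := by
      rw [hcdef, hcKdef, Nat.factorial_succ]; push_cast; ring
    have hfact2 : c2 = ((K:ℝ)+1+1) * c := by
      rw [hc2def, hcdef, Nat.factorial_succ (K+1)]; push_cast; ring
    set E : ℝ := q^(K+1)/cK + D with hEdef
    have hE0 : 0 ≤ E := by positivity
    have hE : ∀ ℓ : ℕ, 1 ≤ ℓ → Hf p ℓ (K+1) ≤ E * (ℓ:ℝ)^K := by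
      intro ℓ hℓ
      have h1ℓ : (1:ℝ) ≤ (ℓ:ℝ) := by exact_mod_cast hℓ
      have h2 := abs_le.1 (hD ℓ hℓ).1
      have hmono : (ℓ:ℝ)^(K-1) ≤ (ℓ:ℝ)^K := pow_le_pow_right₀ h1ℓ (Nat.sub_le K 1)
      have hmul := mul_le_mul_of_nonneg_left hmono hD0
      calc Hf p ℓ (K+1) ≤ q^(K+1)*(ℓ:ℝ)^K/cK + D*(ℓ:ℝ)^(K-1) := by linarith only [h2.2]
        _ ≤ q^(K+1)*(ℓ:ℝ)^K/cK + D*(ℓ:ℝ)^K := by linarith only [hmul]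
        _ = E * (ℓ:ℝ)^K := by rw [hEdef]; ring
    set M : ℝ := q^(K+1+1)/cK with hMdef
    have hM0 : 0 ≤ M := by positivity
    set D' : ℝ := max (q^(K+1+1)/c + q^(K+1+1)/c2) ((p*D + p*E + M)/(1-p)) with hD'def
    have hD'0 : 0 ≤ D' := le_trans (by positivity) (le_max_left _ _)
    have hcoef : p*D' + p*D + p*E + M ≤ D' := by
      have h2 := le_max_right (q^(K+1+1)/c + q^(K+1+1)/c2) ((p*D + p*E + M)/(1-p))
      rw [← hD'def, div_le_iff₀ h1p] at h2
      linarith only [h2]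
    have hH1 : Hf p 1 (K+1+1) = 0 := by
      have h := Hf_succ p 0 (K+1)
      rw [Hf_zero, Hf_zero, Gf_zero] at h
      simpa using h
    have Hclaim : ∀ ℓ : ℕ, 1 ≤ ℓ →
        |Hf p ℓ (K+1+1) - q^(K+1+1) * (ℓ:ℝ)^(K+1) / c| ≤ D' * (ℓ:ℝ)^K := by
      intro ℓ hℓ
      induction ℓ, hℓ using Nat.le_induction with
      | base =>
        rw [hH1]
        simp only [Nat.cast_one, one_pow, mul_one, zero_sub, abs_neg]
        rw [abs_of_nonneg (by positivity)]
        calc q^(K+1+1)/c ≤ q^(K+1+1)/c + q^(K+1+1)/c2 := by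
              have : (0:ℝ) ≤ q^(K+1+1)/c2 := by positivity
              linarith
          _ ≤ D' := le_max_left _ _
      | succ ℓ hℓ ih2 =>
        have h1ℓ : (1:ℝ) ≤ (ℓ:ℝ) := by exact_mod_cast hℓ
        have ha0 : (0:ℝ) ≤ (ℓ:ℝ) := by linarith
        have hA := abs_le.1 ih2
        have hB := abs_le.1 (hD ℓ hℓ).2
        have hH' : 0 ≤ Hf p ℓ (K+1) := Hf_nonneg p hp0 ℓ (K+1)
        have hHE := hE ℓ hℓ
        have hq2 : (0:ℝ) ≤ q^(K+1+1) := pow_nonneg hq0 _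
        have hd1 : ((ℓ:ℝ)+1)^(K+1) - (ℓ:ℝ)^(K+1) ≤ ((K:ℝ)+1) * ((ℓ:ℝ)+1)^K := by
          have h := ineq1 (ℓ:ℝ) ha0 K
          push_cast at h
          linarith only [h]
        have hd0 : (0:ℝ) ≤ ((ℓ:ℝ)+1)^(K+1) - (ℓ:ℝ)^(K+1) := by
          have h := pow_le_pow_left₀ ha0 (by linarith only : (ℓ:ℝ) ≤ (ℓ:ℝ)+1) (K+1)
          linarith only [h]
        have hkey : Hf p (ℓ+1) (K+1+1) - q^(K+1+1) * ((ℓ:ℝ)+1)^(K+1) / c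
            = p * (Hf p ℓ (K+1+1) - q^(K+1+1) * (ℓ:ℝ)^(K+1) / c)
              + p * (Gf p ℓ (K+1) - q^(K+1) * (ℓ:ℝ)^(K+1) / c)
              - p * Hf p ℓ (K+1)
              - q^(K+1+1) * (((ℓ:ℝ)+1)^(K+1) - (ℓ:ℝ)^(K+1)) / c := by
          rw [Hf_succ]
          linear_combination (q^(K+1) * (ℓ:ℝ)^(K+1) / c) * hpq
        have m1u := mul_le_mul_of_nonneg_left hA.2 hp0
        have m1l := mul_le_mul_of_nonneg_left hA.1 hp0
        have m2u := mul_le_mul_of_nonneg_left hB.2 hp0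
        have m2l := mul_le_mul_of_nonneg_left hB.1 hp0
        have m3u := mul_le_mul_of_nonneg_left hHE hp0
        have m3l : 0 ≤ p * Hf p ℓ (K+1) := mul_nonneg hp0 hH'
        have m4u : q^(K+1+1) * (((ℓ:ℝ)+1)^(K+1) - (ℓ:ℝ)^(K+1)) / c ≤ M * ((ℓ:ℝ)+1)^K := by
          rw [div_le_iff₀ hc0]
          have hMc : M * ((ℓ:ℝ)+1)^K * c = q^(K+1+1) * (((K:ℝ)+1) * ((ℓ:ℝ)+1)^K) := by
            rw [hMdef, hfact]
            field_simp
          rw [hMc]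
          exact mul_le_mul_of_nonneg_left hd1 hq2
        have m4l : (0:ℝ) ≤ q^(K+1+1) * (((ℓ:ℝ)+1)^(K+1) - (ℓ:ℝ)^(K+1)) / c :=
          div_nonneg (mul_nonneg hq2 hd0) hc0.le
        have mono1 : (ℓ:ℝ)^K ≤ ((ℓ:ℝ)+1)^K := pow_le_pow_left₀ ha0 (by linarith) K
        have hpow1 : (0:ℝ) ≤ ((ℓ:ℝ)+1)^K := pow_nonneg (by linarith) K
        have pr1 : p * D' * (ℓ:ℝ)^K ≤ p * D' * ((ℓ:ℝ)+1)^K :=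
          mul_le_mul_of_nonneg_left mono1 (mul_nonneg hp0 hD'0)
        have pr2 : p * D * (ℓ:ℝ)^K ≤ p * D * ((ℓ:ℝ)+1)^K :=
          mul_le_mul_of_nonneg_left mono1 (mul_nonneg hp0 hD0)
        have pr3 : p * E * (ℓ:ℝ)^K ≤ p * E * ((ℓ:ℝ)+1)^K :=
          mul_le_mul_of_nonneg_left mono1 (mul_nonneg hp0 hE0)
        have pr4 := mul_le_mul_of_nonneg_right hcoef hpow1
        have pe0 : (0:ℝ) ≤ p * E * ((ℓ:ℝ)+1)^K := mul_nonneg (mul_nonneg hp0 hE0) hpow1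
        have pm0 : (0:ℝ) ≤ M * ((ℓ:ℝ)+1)^K := mul_nonneg hM0 hpow1
        push_cast
        rw [abs_le]
        constructor
        · linarith only [hkey, m1l, m2l, m3u, m4u, pr1, pr2, pr3, pr4]
        · linarith only [hkey, m1u, m2u, m3l, m4l, pr1, pr2, pr4, pe0, pm0]
    set C' : ℝ := max (q^(K+1+1)/c2) ((2:ℝ)^K*(D' + M)) with hC'def
    have hC'0 : 0 ≤ C' := le_trans (by positivity) (le_max_left _ _)
    have hC'coef : (2:ℝ)^K*(D' + M) ≤ C' := le_max_right _ _
    have Gclaim : ∀ ℓ : ℕ, 1 ≤ ℓ →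
        |Gf p ℓ (K+1+1) - q^(K+1+1) * (ℓ:ℝ)^(K+1+1) / c2| ≤ C' * (ℓ:ℝ)^(K+1) := by
      intro ℓ hℓ
      induction ℓ, hℓ using Nat.le_induction with
      | base =>
        have hG1 : Gf p 1 (K+1+1) = 0 := by
          have h := Gf_succ p 0 (K+1+1)
          rw [Gf_zero, hH1] at h
          simpa using h
        rw [hG1]
        simp only [Nat.cast_one, one_pow, mul_one, zero_sub, abs_neg]
        rw [abs_of_nonneg (by positivity)]
        calc q^(K+1+1)/c2 ≤ C' := le_max_left _ _
      | succ ℓ hℓ ih2 =>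
        have h1ℓ : (1:ℝ) ≤ (ℓ:ℝ) := by exact_mod_cast hℓ
        have ha0 : (0:ℝ) ≤ (ℓ:ℝ) := by linarith
        have hq2 : (0:ℝ) ≤ q^(K+1+1) := pow_nonneg hq0 _
        have hA := abs_le.1 ih2
        have hBraw := Hclaim (ℓ+1) (by omega)
        rw [show (((ℓ+1:ℕ)):ℝ) = (ℓ:ℝ)+1 from by push_cast; ring] at hBraw
        have hB := abs_le.1 hBraw
        -- bracket bounds
        have hbr_low : (0:ℝ) ≤ (ℓ:ℝ)^(K+1+1) + ((K:ℝ)+1+1)*((ℓ:ℝ)+1)^(K+1) - ((ℓ:ℝ)+1)^(K+1+1) := by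
          have h := ineq1 (ℓ:ℝ) ha0 (K+1)
          push_cast at h
          linarith only [h]
        have hd1 : ((ℓ:ℝ)+1)^(K+1) - (ℓ:ℝ)^(K+1) ≤ ((K:ℝ)+1) * ((ℓ:ℝ)+1)^K := by
          have h := ineq1 (ℓ:ℝ) ha0 K
          push_cast at h
          linarith only [h]
        have hbr_up : (ℓ:ℝ)^(K+1+1) + ((K:ℝ)+1+1)*((ℓ:ℝ)+1)^(K+1) - ((ℓ:ℝ)+1)^(K+1+1)
            ≤ ((K:ℝ)+1+1) * (((K:ℝ)+1) * ((ℓ:ℝ)+1)^K) := by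
          have h2 := ineq2 (ℓ:ℝ) ha0 (K+1)
          push_cast at h2
          have hd1' := mul_le_mul_of_nonneg_left hd1 (show (0:ℝ) ≤ (K:ℝ)+1+1 by positivity)
          linarith only [h2, hd1']
        have hkey2 : Gf p (ℓ+1) (K+1+1) - q^(K+1+1) * ((ℓ:ℝ)+1)^(K+1+1) / c2
            = (Gf p ℓ (K+1+1) - q^(K+1+1) * (ℓ:ℝ)^(K+1+1) / c2)
              + (Hf p (ℓ+1) (K+1+1) - q^(K+1+1) * ((ℓ:ℝ)+1)^(K+1) / c)
              + q^(K+1+1) * ((ℓ:ℝ)^(K+1+1) + ((K:ℝ)+1+1)*((ℓ:ℝ)+1)^(K+1) - ((ℓ:ℝ)+1)^(K+1+1)) / c2 := by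
          rw [Gf_succ]
          have hdiv : 1/c = ((K:ℝ)+1+1)/c2 := by
            rw [hfact2]
            field_simp
          linear_combination (q^(K+1+1) * ((ℓ:ℝ)+1)^(K+1)) * hdiv
        have hc2cK : c2 = ((K:ℝ)+1+1)*(((K:ℝ)+1)*cK) := by rw [hfact2, hfact]
        have m5u : q^(K+1+1) * ((ℓ:ℝ)^(K+1+1) + ((K:ℝ)+1+1)*((ℓ:ℝ)+1)^(K+1) - ((ℓ:ℝ)+1)^(K+1+1)) / c2
            ≤ M * ((ℓ:ℝ)+1)^K := by
          rw [div_le_iff₀ hc20]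
          have hMc2 : M * ((ℓ:ℝ)+1)^K * c2
              = q^(K+1+1) * (((K:ℝ)+1+1) * (((K:ℝ)+1) * ((ℓ:ℝ)+1)^K)) := by
            rw [hMdef, hc2cK]
            field_simp
          rw [hMc2]
          exact mul_le_mul_of_nonneg_left hbr_up hq2
        have m5l : (0:ℝ) ≤ q^(K+1+1) * ((ℓ:ℝ)^(K+1+1) + ((K:ℝ)+1+1)*((ℓ:ℝ)+1)^(K+1) - ((ℓ:ℝ)+1)^(K+1+1)) / c2 :=
          div_nonneg (mul_nonneg hq2 hbr_low) hc20.le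
        have mono2 : ((ℓ:ℝ)+1)^K ≤ (2:ℝ)^K * (ℓ:ℝ)^K := by
          have h := pow_le_pow_left₀ (by linarith : (0:ℝ) ≤ (ℓ:ℝ)+1) (by linarith : (ℓ:ℝ)+1 ≤ 2*(ℓ:ℝ)) K
          rw [mul_pow] at h
          exact h
        have pr5 : D' * ((ℓ:ℝ)+1)^K ≤ D' * ((2:ℝ)^K * (ℓ:ℝ)^K) :=
          mul_le_mul_of_nonneg_left mono2 hD'0
        have pr6 : M * ((ℓ:ℝ)+1)^K ≤ M * ((2:ℝ)^K * (ℓ:ℝ)^K) :=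
          mul_le_mul_of_nonneg_left mono2 hM0
        have pr7 : ((2:ℝ)^K*(D' + M)) * (ℓ:ℝ)^K ≤ C' * (ℓ:ℝ)^K :=
          mul_le_mul_of_nonneg_right hC'coef (pow_nonneg ha0 K)
        have growth : (ℓ:ℝ)^(K+1) + (ℓ:ℝ)^K ≤ ((ℓ:ℝ)+1)^(K+1) := by
          have h := ineq2 (ℓ:ℝ) ha0 K
          push_cast at h
          have hnn : (0:ℝ) ≤ (K:ℝ) * (ℓ:ℝ)^K := mul_nonneg (Nat.cast_nonneg K) (pow_nonneg ha0 K)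
          linarith only [h, hnn]
        have pr8 : C' * ((ℓ:ℝ)^(K+1) + (ℓ:ℝ)^K) ≤ C' * ((ℓ:ℝ)+1)^(K+1) :=
          mul_le_mul_of_nonneg_left growth hC'0
        have hMn : (0:ℝ) ≤ M * ((2:ℝ)^K * (ℓ:ℝ)^K) :=
          mul_nonneg hM0 (mul_nonneg (pow_nonneg (by norm_num) K) (pow_nonneg ha0 K))
        push_cast
        rw [abs_le]
        constructor
        · linarith only [hkey2, hA.1, hB.1, m5l, pr5, pr6, pr7, pr8, hMn]
        · linarith only [hkey2, hA.2, hB.2, m5u, pr5, pr6, pr7, pr8, hMn]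
    refine ⟨max D' C', le_trans hD'0 (le_max_left _ _), fun ℓ hℓ => ⟨?_, ?_⟩⟩
    · have h := Hclaim ℓ hℓ
      have hpw : (0:ℝ) ≤ (ℓ:ℝ)^K := pow_nonneg (Nat.cast_nonneg ℓ) K
      calc |Hf p ℓ (K+1+1) - q^(K+1+1) * (ℓ:ℝ)^(K+1) / c| ≤ D' * (ℓ:ℝ)^K := h
        _ ≤ (max D' C') * (ℓ:ℝ)^(K+1-1) := by
            rw [Nat.add_sub_cancel]
            exact mul_le_mul_of_nonneg_right (le_max_left _ _) hpw
    · have h := Gclaim ℓ hℓ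
      have hpw : (0:ℝ) ≤ (ℓ:ℝ)^(K+1) := pow_nonneg (Nat.cast_nonneg ℓ) (K+1)
      calc |Gf p ℓ (K+1+1) - q^(K+1+1) * (ℓ:ℝ)^(K+1+1) / c2| ≤ C' * (ℓ:ℝ)^(K+1) := h
        _ ≤ (max D' C') * (ℓ:ℝ)^(K+1) := mul_le_mul_of_nonneg_right (le_max_right _ _) hpw


/-- if each site of `[1,ℓ]` belongs to the random set independently with
probability `p`, then `E(Q_{K,ℓ}) = (1/K!)(p/(1−p))^K ℓ^K + O(ℓ^{K−1})`. -/
theorem expected_QK_asymptotics (K : ℕ) (hK : 1 ≤ K) (p : ℝ) (hp0 : 0 ≤ p) (hp1 : p < 1) :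
    ∃ C : ℝ, 0 ≤ C ∧ ∀ ℓ : ℕ, 1 ≤ ℓ →
      |(∑ S ∈ (Finset.Icc (1:ℤ) (ℓ:ℤ)).powerset,
          p ^ S.card * (1 - p) ^ (ℓ - S.card) * (QK K S : ℝ))
        - (1 / (K.factorial : ℝ)) * (p / (1 - p)) ^ K * (ℓ:ℝ) ^ K|
      ≤ C * (ℓ:ℝ) ^ (K - 1) := by
  obtain ⟨K', rfl⟩ : ∃ K', K = K' + 1 := ⟨K - 1, by omega⟩
  obtain ⟨D, hD0, hD⟩ := main_est p hp0 hp1 K'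
  refine ⟨D, hD0, fun ℓ hℓ => ?_⟩
  rw [expectation_eq]
  have h := (hD ℓ hℓ).2
  rw [show (1 / (((K'+1).factorial : ℕ) : ℝ)) * (p/(1-p))^(K'+1) * (ℓ:ℝ)^(K'+1)
      = (p/(1-p))^(K'+1) * (ℓ:ℝ)^(K'+1) / (((K'+1).factorial : ℕ) : ℝ) from by ring]
  rw [Nat.add_sub_cancel]
  exact h
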